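/- Variational formula for the potential: let $H \in \mathbb{C}^{n\times n}$ be upper Hessenberg with subdiagonal entries $h_{i+1,i}$, and for $1 \le k \le n-1$ define $\psi_k(H) = |h_{n-k+1,n-k}\cdots h_{n,n-1}|^{1/k}$. Then $\psi_k(H) = \min_{p} \|e_n^* p(H)\|^{1/k}$, where the minimum is over all monic polynomials $p$ of degree $k$, and the minimum is attained by the characteristic polynomial $\chi_k$ of the bottom-right $k \times k$ corner of $H$. -/

import Mathlib

open Polynomial Matrix

/-- The Euclidean norm of the last row of a matrix, i.e. `‖eₙ* A‖`. -/
noncomputable def rowNorm {n : ℕ} (A : Matrix (Fin (n + 1)) (Fin (n + 1)) ℂ) : ℝ :=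
  Real.sqrt (∑ j, ‖A (Fin.last n) j‖ ^ 2)

/-- The potential `ψ_k(H)`: geometric mean of the absolute values of the bottom `k`
subdiagonal entries of the `(n+1) × (n+1)` Hessenberg matrix `H`. -/
noncomputable def psi {n : ℕ} (k : ℕ) (hk : k ≤ n)
    (H : Matrix (Fin (n + 1)) (Fin (n + 1)) ℂ) : ℝ :=
  (∏ j : Fin k, ‖
      (H ⟨n - k + ↑j + 1, by have := j.isLt; omega⟩ ⟨n - k + ↑j, by have := j.isLt; omega⟩)‖) ^
    (1 / (k : ℝ))

/-- Embedding of the bottom-right `k × k` corner indices. -/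
def cornerEmb {n : ℕ} (k : ℕ) (hk : k ≤ n) (j : Fin k) : Fin (n + 1) :=
  ⟨n + 1 - k + ↑j, by have := j.isLt; omega⟩

/-!
In a Hessenberg matrix the last row of `H ^ m` vanishes left of column `n - m`, and its entry
in that column is the product of the `m` bottom subdiagonal entries. So for every monic `p` of
degree `k` the entry of `eₙ* p(H)` in column `n - k` is that product for `m = k`, whatever the
lower coefficients of `p`, and it bounds `‖eₙ* p(H)‖` from below. For `deg p ≤ k` the last row
of `p(H)` restricted to the last `k` columns is the last row of `p(H_(k))`; for the
characteristic polynomial of `H_(k)` it vanishes by Cayley–Hamilton, so `eₙ* χ_k(H)` is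
supported on column `n - k` alone and the bound is attained.
-/

theorem cornerEmb_injective {n k : ℕ} (hkn : k ≤ n) :
    Function.Injective (cornerEmb k hkn) := fun i j h => by
  simpa [cornerEmb, Fin.ext_iff] using h

theorem mem_range_cornerEmb {n k : ℕ} (hkn : k ≤ n) {i : Fin (n + 1)} :
    i ∈ Set.range (cornerEmb k hkn) ↔ n + 1 - k ≤ i := by
  refine ⟨?_, fun hi => ⟨⟨i - (n + 1 - k), by omega⟩, by ext; simp [cornerEmb]; omega⟩⟩
  rintro ⟨j, rfl⟩
  simp [cornerEmb]

namespace Matrix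

def IsUpperHessenberg {R : Type*} [Zero R] {m : ℕ} (H : Matrix (Fin m) (Fin m) R) : Prop :=
  ∀ i j : Fin m, (j : ℕ) + 1 < i → H i j = 0

namespace IsUpperHessenberg

section CommSemiring

variable {R : Type*} [CommSemiring R] {n : ℕ} {H : Matrix (Fin (n + 1)) (Fin (n + 1)) R}

theorem pow_apply_last_eq_zero (hH : H.IsUpperHessenberg) {m : ℕ} {j : Fin (n + 1)}
    (hj : (j : ℕ) + m < n) : (H ^ m) (Fin.last n) j = 0 := by
  induction m generalizing j with
  | zero => exact one_apply_ne fun h => by simp [Fin.ext_iff] at h; omega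
  | succ m ih =>
    rw [pow_succ, mul_apply]
    refine Finset.sum_eq_zero fun i _ => ?_
    by_cases hi : (i : ℕ) + m < n
    · rw [ih hi, zero_mul]
    · rw [hH i j (by omega), mul_zero]

theorem pow_apply_last_sub (hH : H.IsUpperHessenberg) {m : ℕ} (hm : m ≤ n) :
    (H ^ m) (Fin.last n) ⟨n - m, Nat.sub_lt_succ n m⟩ =
      ∏ j : Fin m, H ⟨n - m + j + 1, by omega⟩ ⟨n - m + j, by omega⟩ := by
  induction m with
  | zero => simp [Fin.last]
  | succ m ih =>
    rw [pow_succ, mul_apply, Finset.sum_eq_single ⟨n - m, by omega⟩, ih (by omega),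
      Fin.prod_univ_succ, mul_comm]
    · congr 1
      · congr 1; ext; simp; omega
      · refine Finset.prod_congr rfl fun j _ => ?_
        congr 1 <;> ext <;> simp [Fin.val_succ] <;> omega
    · intro i _ hne
      by_cases hi : (i : ℕ) + m < n
      · rw [hH.pow_apply_last_eq_zero hi, zero_mul]
      · rw [hH i _ (by simp [Fin.ext_iff] at hne; simp; omega), mul_zero]
    · simp

theorem aeval_apply_last_eq_zero (hH : H.IsUpperHessenberg) {p : R[X]} {k : ℕ}
    (hp : p.natDegree ≤ k) {j : Fin (n + 1)} (hj : (j : ℕ) + k < n) :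
    aeval H p (Fin.last n) j = 0 := by
  simp only [aeval_eq_sum_range, sum_apply, smul_apply]
  refine Finset.sum_eq_zero fun i hi => ?_
  rw [hH.pow_apply_last_eq_zero (by rw [Finset.mem_range] at hi; omega), smul_zero]

theorem aeval_apply_last_sub_of_monic (hH : H.IsUpperHessenberg) {p : R[X]} (hp : p.Monic)
    {k : ℕ} (hkn : k ≤ n) (hpk : p.natDegree = k) :
    aeval H p (Fin.last n) ⟨n - k, Nat.sub_lt_succ n k⟩ =
      (H ^ k) (Fin.last n) ⟨n - k, Nat.sub_lt_succ n k⟩ := by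
  simp only [aeval_eq_sum_range, sum_apply, smul_apply]
  rw [hpk, Finset.sum_range_succ, Finset.sum_eq_zero, zero_add, ← hpk, hp.coeff_natDegree,
    one_smul]
  intro i hi
  rw [hH.pow_apply_last_eq_zero (by rw [Finset.mem_range] at hi; simp only; omega), smul_zero]

theorem pow_apply_last_cornerEmb (hH : H.IsUpperHessenberg) {k : ℕ} (hkn : k ≤ n) {m : ℕ}
    (hmk : m ≤ k) (j : Fin k) :
    (H ^ m) (Fin.last n) (cornerEmb k hkn j) =
      (H.submatrix (cornerEmb k hkn) (cornerEmb k hkn) ^ m)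
        ⟨k - 1, by have := j.isLt; omega⟩ j := by
  induction m generalizing j with
  | zero =>
    rw [pow_zero, pow_zero, one_apply, one_apply]
    congr 1
    simp [Fin.ext_iff, cornerEmb]
    omega
  | succ m ih =>
    rw [pow_succ, pow_succ, mul_apply, mul_apply]
    refine (Fintype.sum_of_injective _ (cornerEmb_injective hkn) _ _ (fun i hi => ?_)
      (fun i => by rw [ih (by omega)]; rfl)).symm
    rw [mem_range_cornerEmb] at hi
    rw [hH.pow_apply_last_eq_zero (by omega), zero_mul]

theorem aeval_apply_last_cornerEmb (hH : H.IsUpperHessenberg) {k : ℕ} (hkn : k ≤ n)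
    {p : R[X]} (hp : p.natDegree ≤ k) (j : Fin k) :
    aeval H p (Fin.last n) (cornerEmb k hkn j) =
      aeval (H.submatrix (cornerEmb k hkn) (cornerEmb k hkn)) p
        ⟨k - 1, by have := j.isLt; omega⟩ j := by
  simp only [aeval_eq_sum_range, sum_apply, smul_apply]
  refine Finset.sum_congr rfl fun i hi => ?_
  rw [hH.pow_apply_last_cornerEmb hkn (by rw [Finset.mem_range] at hi; omega)]

end CommSemiring

section CommRing

variable {R : Type*} [CommRing R] [Nontrivial R] {n : ℕ}
  {H : Matrix (Fin (n + 1)) (Fin (n + 1)) R}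

theorem aeval_charpoly_corner_last (hH : H.IsUpperHessenberg) {k : ℕ} (hkn : k ≤ n) :
    aeval H (H.submatrix (cornerEmb k hkn) (cornerEmb k hkn)).charpoly (Fin.last n) =
      Pi.single ⟨n - k, Nat.sub_lt_succ n k⟩
        ((H ^ k) (Fin.last n) ⟨n - k, Nat.sub_lt_succ n k⟩) := by
  set A := H.submatrix (cornerEmb k hkn) (cornerEmb k hkn)
  have hdeg : A.charpoly.natDegree = k := by
    rw [charpoly_natDegree_eq_dim, Fintype.card_fin]
  ext j
  rw [Pi.single_apply]
  split_ifs with hj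
  · subst hj
    exact hH.aeval_apply_last_sub_of_monic A.charpoly_monic hkn hdeg
  by_cases hjk : (j : ℕ) + k < n
  · exact hH.aeval_apply_last_eq_zero hdeg.le hjk
  · obtain ⟨i, rfl⟩ : j ∈ Set.range (cornerEmb k hkn) := by
      rw [mem_range_cornerEmb]
      simp only [Fin.ext_iff] at hj
      omega
    rw [hH.aeval_apply_last_cornerEmb hkn hdeg.le, aeval_self_charpoly, zero_apply]

end CommRing

end IsUpperHessenberg

end Matrix

theorem rowNorm_eq_norm_toLp {n : ℕ} (A : Matrix (Fin (n + 1)) (Fin (n + 1)) ℂ) :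
    rowNorm A = ‖WithLp.toLp 2 (A (Fin.last n))‖ := by
  rw [rowNorm, EuclideanSpace.norm_eq]

theorem Matrix.IsUpperHessenberg.psi_eq_norm_pow_apply_last {n k : ℕ} (hkn : k ≤ n)
    {H : Matrix (Fin (n + 1)) (Fin (n + 1)) ℂ} (hH : H.IsUpperHessenberg) :
    psi k hkn H = ‖(H ^ k) (Fin.last n) ⟨n - k, Nat.sub_lt_succ n k⟩‖ ^ (1 / (k : ℝ)) := by
  rw [psi, hH.pow_apply_last_sub hkn, norm_prod]

theorem stmt5_general {n k : ℕ} (hkn : k ≤ n)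
    (H : Matrix (Fin (n + 1)) (Fin (n + 1)) ℂ)
    (hHess : ∀ i j : Fin (n + 1), (j : ℕ) + 1 < (i : ℕ) → H i j = 0) :
    (∀ p : ℂ[X], p.Monic → p.natDegree = k →
        psi k hkn H ≤ rowNorm (aeval H p) ^ (1 / (k : ℝ))) ∧
      rowNorm (aeval H (H.submatrix (cornerEmb k hkn) (cornerEmb k hkn)).charpoly) ^
          (1 / (k : ℝ)) =
        psi k hkn H := by
  have hH : H.IsUpperHessenberg := hHess
  rw [hH.psi_eq_norm_pow_apply_last hkn]
  refine ⟨fun p hp hpk => ?_, ?_⟩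
  · rw [rowNorm_eq_norm_toLp, ← hH.aeval_apply_last_sub_of_monic hp hkn hpk]
    gcongr
    exact PiLp.norm_apply_le (WithLp.toLp 2 (aeval H p (Fin.last n))) _
  · rw [rowNorm_eq_norm_toLp, hH.aeval_charpoly_corner_last hkn, PiLp.toLp_single,
      PiLp.norm_single]

/-- Variational formula for the potential: for an upper Hessenberg matrix `H`,
`ψ_k(H) = min_p ‖eₙ* p(H)‖^{1/k}` over monic polynomials `p` of degree `k`, with the
minimum attained at the characteristic polynomial of the bottom-right `k × k` corner. -/
theorem stmt5 {n k : ℕ} (hk1 : 1 ≤ k) (hkn : k ≤ n)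
    (H : Matrix (Fin (n + 1)) (Fin (n + 1)) ℂ)
    (hHess : ∀ i j : Fin (n + 1), (j : ℕ) + 1 < (i : ℕ) → H i j = 0) :
    (∀ p : ℂ[X], p.Monic → p.natDegree = k →
        psi k hkn H ≤ rowNorm (aeval H p) ^ (1 / (k : ℝ))) ∧
      rowNorm (aeval H (H.submatrix (cornerEmb k hkn) (cornerEmb k hkn)).charpoly) ^
          (1 / (k : ℝ)) =
        psi k hkn H :=
  stmt5_general hkn H hHess
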